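/- arXiv:2208.05553 — 2 statements merged into one kernel-verified Lean document; each statement's English description precedes it below -/
import Mathlib

section
/- Let z_1,...,z_n be mutually independent Bernoulli random variables with P(z_j=1)=p_j and p ≤ p_j ≤ 1−p for some p ∈ (0,1/2]. Then for any subsets S, S', T, T' of {1,...,n}, the covariance Cov[ ∏_{j∈S} (z_j−p_j)/(p_j(1−p_j)) ∏_{j'∈S'} z_{j'}, ∏_{k∈T} (z_k−p_k)/(p_k(1−p_k)) ∏_{k'∈T'} z_{k'} ] is nonnegative and at most 1((S△T) ⊆ (S'∪T')) · (1/(p(1−p)))^{|S∩T|}, where S△T denotes the symmetric difference. -/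
open Finset Real

/-- Value of a Bernoulli treatment bit as a real number. -/
noncomputable def zval : Bool → ℝ := fun b => if b then 1 else 0

/-- Expectation of `f` under `n` mutually independent Bernoulli(`p j`) bits. -/
noncomputable def bexp {n : ℕ} (p : Fin n → ℝ) (f : (Fin n → Bool) → ℝ) : ℝ :=
  ∑ z : Fin n → Bool, (∏ j, if z j then p j else 1 - p j) * f z

/-- The SNIPE coefficient function `g`. -/
noncomputable def gcoef {n : ℕ} (p : Fin n → ℝ) (S : Finset (Fin n)) : ℝ :=
  if S.Nonempty then (∏ s ∈ S, (1 - p s)) - ∏ s ∈ S, (-p s) else 0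

/-- Covariance under the product Bernoulli measure. -/
noncomputable def bcov {n : ℕ} (p : Fin n → ℝ) (f h : (Fin n → Bool) → ℝ) : ℝ :=
  bexp p (fun z => f z * h z) - bexp p f * bexp p h

lemma bexp_prod {n : ℕ} (p : Fin n → ℝ) (F : Fin n → Bool → ℝ) :
    bexp p (fun z => ∏ j, F j (z j)) = ∏ j, (p j * F j true + (1 - p j) * F j false) := by
  unfold bexp
  have : ∀ j : Fin n, p j * F j true + (1 - p j) * F j false
      = ∑ b : Bool, (if b then p j else 1 - p j) * F j b := by
    intro j; simp
  simp_rw [this, Fintype.prod_sum]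
  apply Finset.sum_congr rfl
  intro z _
  rw [← Finset.prod_mul_distrib]
noncomputable def cf (r : ℝ) (s s' : Bool) (b : Bool) : ℝ :=
  (if s then (zval b - r) / (r * (1 - r)) else 1) * (if s' then zval b else 1)

noncomputable def cE (r : ℝ) (s s' : Bool) : ℝ := r * cf r s s' true + (1 - r) * cf r s s' false

noncomputable def cA (r : ℝ) (s s' t t' : Bool) : ℝ :=
  r * (cf r s s' true * cf r t t' true) + (1 - r) * (cf r s s' false * cf r t t' false)

lemma cE_eq {r : ℝ} (h0 : 0 < r) (h1' : r < 1) (s s' : Bool) :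
    cE r s s' = if s then (if s' then 1 else 0) else if s' then r else 1 := by
  have hr : r ≠ 0 := ne_of_gt h0
  have hr1 : (1 : ℝ) - r ≠ 0 := by intro h; linarith [h]
  cases s <;> cases s' <;> simp [cE, cf, zval] <;> field_simp <;> ring

lemma cA_eq {r : ℝ} (h0 : 0 < r) (h1' : r < 1) (s s' t t' : Bool) :
    cA r s s' t t' =
      if s && t then (if s' || t' then 1 / r else 1 / (r * (1 - r)))
      else if s || t then (if s' || t' then 1 else 0)
      else (if s' || t' then r else 1) := by
  have hr : r ≠ 0 := ne_of_gt h0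
  have hr1 : (1 : ℝ) - r ≠ 0 := by intro h; linarith [h]
  cases s <;> cases s' <;> cases t <;> cases t' <;>
    simp [cA, cf, zval] <;> field_simp <;> ring

section coord
variable {r q : ℝ} (hq : 0 < q) (hq2 : q ≤ 1 / 2) (h1 : q ≤ r) (h2 : r ≤ 1 - q)

include hq hq2 h1 h2

lemma cE_nonneg (s s' : Bool) : 0 ≤ cE r s s' := by
  have h0 : 0 < r := lt_of_lt_of_le hq h1
  have h1' : r < 1 := lt_of_le_of_lt h2 (by linarith)
  rw [cE_eq h0 h1']
  cases s <;> cases s' <;> simp <;> linarith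

lemma cA_nonneg (s s' t t' : Bool) : 0 ≤ cA r s s' t t' := by
  have h0 : 0 < r := lt_of_lt_of_le hq h1
  have h1' : r < 1 := lt_of_le_of_lt h2 (by linarith)
  rw [cA_eq h0 h1']
  cases s <;> cases s' <;> cases t <;> cases t' <;> simp only [Bool.and_true, Bool.true_and, Bool.false_and, Bool.and_false, Bool.or_true, Bool.true_or, Bool.false_or, Bool.or_false, Bool.and_self, Bool.or_self, if_true, if_false, Bool.false_eq_true, reduceIte] <;> first | linarith | exact one_div_nonneg.mpr (by nlinarith)

lemma cE_le_cA (s s' t t' : Bool) : cE r s s' * cE r t t' ≤ cA r s s' t t' := by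
  have h0 : 0 < r := lt_of_lt_of_le hq h1
  have h1' : r < 1 := lt_of_le_of_lt h2 (by linarith)
  have key : (1:ℝ) ≤ 1 / r := by rw [le_div_iff₀ h0]; linarith
  have key2 : (0:ℝ) ≤ 1 / (r * (1 - r)) := one_div_nonneg.mpr (by nlinarith)
  rw [cE_eq h0 h1', cE_eq h0 h1', cA_eq h0 h1']
  cases s <;> cases s' <;> cases t <;> cases t' <;> simp only [Bool.and_true, Bool.true_and, Bool.false_and, Bool.and_false, Bool.or_true, Bool.true_or, Bool.false_or, Bool.or_false, Bool.and_self, Bool.or_self, if_true, if_false, Bool.false_eq_true, reduceIte] <;> nlinarith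

lemma cA_le (s s' t t' : Bool) :
    cA r s s' t t' ≤ if s && t then 1 / (q * (1 - q)) else 1 := by
  have h0 : 0 < r := lt_of_lt_of_le hq h1
  have h1' : r < 1 := lt_of_le_of_lt h2 (by linarith)
  have hq1 : (0:ℝ) < 1 - q := by linarith
  have hkey : q * (1 - q) ≤ r * (1 - r) := by nlinarith
  have hk2 : q * (1 - q) ≤ r := by nlinarith
  have b1 : 1 / (r * (1 - r)) ≤ 1 / (q * (1 - q)) :=
    one_div_le_one_div_of_le (by positivity) hkey
  have b2 : 1 / r ≤ 1 / (q * (1 - q)) :=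
    one_div_le_one_div_of_le (by positivity) hk2
  rw [cA_eq h0 h1']
  cases s <;> cases s' <;> cases t <;> cases t' <;> simp only [Bool.and_true, Bool.true_and, Bool.false_and, Bool.and_false, Bool.or_true, Bool.true_or, Bool.false_or, Bool.or_false, Bool.and_self, Bool.or_self, if_true, if_false, Bool.false_eq_true, reduceIte] <;> linarith

end coord

lemma prod_split {n : ℕ} (p : Fin n → ℝ) (U U' : Finset (Fin n)) (z : Fin n → Bool) :
    (∏ j ∈ U, ((zval (z j) - p j) / (p j * (1 - p j)))) * ∏ j ∈ U', zval (z j)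
      = ∏ j, cf (p j) (decide (j ∈ U)) (decide (j ∈ U')) (z j) := by
  rw [← Fintype.prod_ite_mem U (fun j => (zval (z j) - p j) / (p j * (1 - p j))),
      ← Fintype.prod_ite_mem U' (fun j => zval (z j)), ← Finset.prod_mul_distrib]
  refine Finset.prod_congr rfl fun j _ => ?_
  by_cases hU : j ∈ U <;> by_cases hU' : j ∈ U' <;> simp [cf, hU, hU']

theorem stmt6 {n : ℕ} (p : Fin n → ℝ) (q : ℝ) (hq : 0 < q) (hq2 : q ≤ 1 / 2)
    (hp : ∀ j, q ≤ p j ∧ p j ≤ 1 - q) (S S' T T' : Finset (Fin n)) :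
    0 ≤ bcov p
        (fun z => (∏ j ∈ S, ((zval (z j) - p j) / (p j * (1 - p j)))) *
          ∏ j ∈ S', zval (z j))
        (fun z => (∏ k ∈ T, ((zval (z k) - p k) / (p k * (1 - p k)))) *
          ∏ k ∈ T', zval (z k)) ∧
    bcov p
        (fun z => (∏ j ∈ S, ((zval (z j) - p j) / (p j * (1 - p j)))) *
          ∏ j ∈ S', zval (z j))
        (fun z => (∏ k ∈ T, ((zval (z k) - p k) / (p k * (1 - p k)))) *
          ∏ k ∈ T', zval (z k))
      ≤ (if (S ∪ T) \ (S ∩ T) ⊆ S' ∪ T' then 1 else 0) *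
          (1 / (q * (1 - q))) ^ (S ∩ T).card := by
  have hcov : bcov p
        (fun z => (∏ j ∈ S, ((zval (z j) - p j) / (p j * (1 - p j)))) *
          ∏ j ∈ S', zval (z j))
        (fun z => (∏ k ∈ T, ((zval (z k) - p k) / (p k * (1 - p k)))) *
          ∏ k ∈ T', zval (z k))
      = (∏ j, cA (p j) (decide (j ∈ S)) (decide (j ∈ S')) (decide (j ∈ T)) (decide (j ∈ T')))
        - ∏ j, (cE (p j) (decide (j ∈ S)) (decide (j ∈ S')) *
            cE (p j) (decide (j ∈ T)) (decide (j ∈ T'))) := by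
    unfold bcov
    have e1 : (fun z : Fin n → Bool =>
        ((∏ j ∈ S, ((zval (z j) - p j) / (p j * (1 - p j)))) * ∏ j ∈ S', zval (z j)) *
        ((∏ k ∈ T, ((zval (z k) - p k) / (p k * (1 - p k)))) * ∏ k ∈ T', zval (z k)))
        = fun z => ∏ j, (cf (p j) (decide (j ∈ S)) (decide (j ∈ S')) (z j) *
            cf (p j) (decide (j ∈ T)) (decide (j ∈ T')) (z j)) := by
      funext z
      rw [prod_split p S S' z, prod_split p T T' z, ← Finset.prod_mul_distrib]
    have e2 : (fun z : Fin n → Bool =>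
        (∏ j ∈ S, ((zval (z j) - p j) / (p j * (1 - p j)))) * ∏ j ∈ S', zval (z j))
        = fun z => ∏ j, cf (p j) (decide (j ∈ S)) (decide (j ∈ S')) (z j) := by
      funext z; exact prod_split p S S' z
    have e3 : (fun z : Fin n → Bool =>
        (∏ k ∈ T, ((zval (z k) - p k) / (p k * (1 - p k)))) * ∏ k ∈ T', zval (z k))
        = fun z => ∏ j, cf (p j) (decide (j ∈ T)) (decide (j ∈ T')) (z j) := by
      funext z; exact prod_split p T T' z
    rw [e1, e2, e3, bexp_prod, bexp_prod,
      bexp_prod p (fun j b => cf (p j) (decide (j ∈ S)) (decide (j ∈ S')) b *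
        cf (p j) (decide (j ∈ T)) (decide (j ∈ T')) b), ← Finset.prod_mul_distrib]
    rfl
  have hBA : ∀ j : Fin n,
      cE (p j) (decide (j ∈ S)) (decide (j ∈ S')) * cE (p j) (decide (j ∈ T)) (decide (j ∈ T'))
        ≤ cA (p j) (decide (j ∈ S)) (decide (j ∈ S')) (decide (j ∈ T)) (decide (j ∈ T')) :=
    fun j => cE_le_cA hq hq2 (hp j).1 (hp j).2 _ _ _ _
  have hB0 : ∀ j : Fin n, 0 ≤
      cE (p j) (decide (j ∈ S)) (decide (j ∈ S')) * cE (p j) (decide (j ∈ T)) (decide (j ∈ T')) :=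
    fun j => mul_nonneg (cE_nonneg hq hq2 (hp j).1 (hp j).2 _ _) (cE_nonneg hq hq2 (hp j).1 (hp j).2 _ _)
  have hA0 : ∀ j : Fin n, 0 ≤
      cA (p j) (decide (j ∈ S)) (decide (j ∈ S')) (decide (j ∈ T)) (decide (j ∈ T')) :=
    fun j => cA_nonneg hq hq2 (hp j).1 (hp j).2 _ _ _ _
  constructor
  · rw [hcov, sub_nonneg]
    exact Finset.prod_le_prod (fun j _ => hB0 j) (fun j _ => hBA j)
  · by_cases hsub : (S ∪ T) \ (S ∩ T) ⊆ S' ∪ T'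
    · rw [if_pos hsub, one_mul, hcov]
      have h1 : (∏ j, cA (p j) (decide (j ∈ S)) (decide (j ∈ S')) (decide (j ∈ T)) (decide (j ∈ T')))
          ≤ ∏ j, (if j ∈ S ∩ T then 1 / (q * (1 - q)) else 1) := by
        refine Finset.prod_le_prod (fun j _ => hA0 j) (fun j _ => ?_)
        have := cA_le hq hq2 (hp j).1 (hp j).2 (decide (j ∈ S)) (decide (j ∈ S')) (decide (j ∈ T)) (decide (j ∈ T'))
        by_cases hjS : j ∈ S <;> by_cases hjT : j ∈ T <;>
          simp only [hjS, hjT, decide_eq_true_eq, Bool.and_self, Bool.and_false,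
            Bool.false_and, Finset.mem_inter, and_true, and_false, false_and, if_true, if_false,
            true_and] at this ⊢ <;>
          simpa [Finset.mem_inter, hjS, hjT] using this
      have h2 : (∏ j, (if j ∈ S ∩ T then 1 / (q * (1 - q)) else 1))
          = (1 / (q * (1 - q))) ^ (S ∩ T).card := by
        rw [Fintype.prod_ite_mem, Finset.prod_const]
      have h3 : 0 ≤ ∏ j, cE (p j) (decide (j ∈ S)) (decide (j ∈ S')) *
          cE (p j) (decide (j ∈ T)) (decide (j ∈ T')) :=
        Finset.prod_nonneg fun j _ => hB0 j
      linarith [h1, h2.le, h3]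
    · rw [if_neg hsub, zero_mul, hcov]
      obtain ⟨j₀, hj₀, hj₀'⟩ := Finset.not_subset.mp hsub
      rw [Finset.mem_sdiff, Finset.mem_union, Finset.mem_inter] at hj₀
      rw [Finset.mem_union] at hj₀'
      push_neg at hj₀'
      obtain ⟨hST, hnST⟩ := hj₀
      have h0 : 0 < p j₀ := lt_of_lt_of_le hq (hp j₀).1
      have h1' : p j₀ < 1 := lt_of_le_of_lt (hp j₀).2 (by linarith)
      have hAz : cA (p j₀) (decide (j₀ ∈ S)) (decide (j₀ ∈ S')) (decide (j₀ ∈ T)) (decide (j₀ ∈ T')) = 0 := by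
        rw [cA_eq h0 h1']
        rcases hST with hS | hT
        · have hT : j₀ ∉ T := fun h => hnST ⟨hS, h⟩
          simp [hS, hT, hj₀'.1, hj₀'.2]
        · have hS : j₀ ∉ S := fun h => hnST ⟨h, hT⟩
          simp [hS, hT, hj₀'.1, hj₀'.2]
      have hEz : cE (p j₀) (decide (j₀ ∈ S)) (decide (j₀ ∈ S')) *
          cE (p j₀) (decide (j₀ ∈ T)) (decide (j₀ ∈ T')) = 0 := by
        rw [cE_eq h0 h1', cE_eq h0 h1']
        rcases hST with hS | hT
        · simp [hS, hj₀'.1]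
        · simp [hT, hj₀'.2]
      rw [Finset.prod_eq_zero (Finset.mem_univ j₀) hAz,
          Finset.prod_eq_zero (Finset.mem_univ j₀) hEz, sub_zero]
end

section
/- If β ≥ |N_i| for every unit i, then for every z ∈ {0,1}^n the SNIPE weight w_i(z) = ∑_{S⊆N_i, |S|≤β} g(S) ∏_{j∈S} (z_j−p_j)/(p_j(1−p_j)) equals ∏_{j∈N_i} z_j/p_j − ∏_{j∈N_i} (1−z_j)/(1−p_j); consequently SNIPE coincides with the Horvitz–Thompson estimator. -/
open Finset Real

/-!
Expanding `∏_{j∈N} (1 + a_j c_j)` over subsets of `N` turns the sum of `g(S) ∏_{j∈S} c_j` over all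
`S ⊆ N` into `∏_{j∈N} (1 + (1 - p_j) c_j) - ∏_{j∈N} (1 - p_j c_j)`; once `β ≥ |N|` the truncation
`|S| ≤ β` is vacuous. With `c_j = (z_j - p_j) / (p_j (1 - p_j))` the two factors become `z_j / p_j`
and `(1 - z_j) / (1 - p_j)`.
-/

lemma gcoef_eq {n : ℕ} (p : Fin n → ℝ) (S : Finset (Fin n)) :
    gcoef p S = (∏ s ∈ S, (1 - p s)) - ∏ s ∈ S, (-p s) := by
  unfold gcoef
  split_ifs with hS
  · rfl
  · simp [not_nonempty_iff_eq_empty.mp hS]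

lemma sum_powerset_gcoef_mul_prod {n : ℕ} (p c : Fin n → ℝ) (N : Finset (Fin n)) :
    ∑ S ∈ N.powerset, gcoef p S * ∏ j ∈ S, c j
      = ∏ j ∈ N, (1 + (1 - p j) * c j) - ∏ j ∈ N, (1 + -p j * c j) := by
  simp only [gcoef_eq, sub_mul, ← prod_mul_distrib, sum_sub_distrib, prod_one_add]

theorem stmt11 {n : ℕ} (p : Fin n → ℝ) (hp : ∀ j, 0 < p j ∧ p j < 1)
    (N : Finset (Fin n)) (β : ℕ) (hβ : N.card ≤ β) (z : Fin n → Bool) :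
    ∑ S ∈ N.powerset.filter (fun S => S.card ≤ β),
        gcoef p S * ∏ j ∈ S, ((zval (z j) - p j) / (p j * (1 - p j)))
    = (∏ j ∈ N, (zval (z j) / p j)) - ∏ j ∈ N, ((1 - zval (z j)) / (1 - p j)) := by
  have hfilter : N.powerset.filter (fun S => S.card ≤ β) = N.powerset :=
    filter_true_of_mem fun S hS => (card_le_card (mem_powerset.mp hS)).trans hβ
  rw [hfilter, sum_powerset_gcoef_mul_prod]
  congr 1 <;> refine prod_congr rfl fun j _ => ?_
  all_goals
    have hp0 : p j ≠ 0 := (hp j).1.ne'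
    have hp1 : 1 - p j ≠ 0 := sub_ne_zero.mpr (hp j).2.ne'
    field_simp
    ring
end
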